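/- For every regular language R with a chosen finite union-free decomposition, and every word w ∈ R, there exists a regular expression in κ(R) that is also a star-generalization of w: κ(R) ∩ Ξ(w) ≠ ∅. -/

import Mathlib

open Computability

inductive UnionFree {α : Type*} : RegularExpression α → Prop
  | epsilon : UnionFree 1
  | char (a : α) : UnionFree (RegularExpression.char a)
  | comp {e1 e2} : UnionFree e1 → UnionFree e2 → UnionFree (e1 * e2)
  | star {e} : UnionFree e → UnionFree (RegularExpression.star e)

noncomputable def bigUnion {α : Type*} (E : Finset (RegularExpression α)) : RegularExpression α :=
  E.toList.foldr (· + ·) 0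

noncomputable def kappa {α : Type*} : RegularExpression α → Set (RegularExpression α)
  | .zero => ∅
  | .epsilon => {1}
  | .char a => {RegularExpression.char a}
  | .plus _ _ => ∅
  | .comp e1 e2 => {r | ∃ r1 ∈ kappa e1, ∃ r2 ∈ kappa e2, r = r1 * r2}
  | .star e => {r | ∃ E : Finset (RegularExpression α), ↑E ⊆ kappa e ∧ r = (bigUnion E).star}

/-- The regular expression denoting a single word. -/
def wordExpr {α : Type*} : List α → RegularExpression α
  | [] => 1
  | x :: xs => RegularExpression.char x * wordExpr xs

/-- `InXi w r` means `r` is a star-generalization of the word `w`, i.e. `r ∈ Ξ(w)`. -/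
inductive InXi {α : Type*} : List α → RegularExpression α → Prop
  | nil : InXi [] 1
  | base (w : List α) (h : w ≠ []) : InXi w (wordExpr w)
  | baseStar (w : List α) (h : w ≠ []) : InXi w (wordExpr w).star
  | comp {w1 w2 : List α} {e1 e2} (h1 : w1 ≠ []) (h2 : w2 ≠ []) :
      InXi w1 e1 → InXi w2 e2 → InXi (w1 ++ w2) (e1 * e2)
  | compStar {w1 w2 : List α} {e1 e2} (h1 : w1 ≠ []) (h2 : w2 ≠ []) :
      InXi w1 e1 → InXi w2 e2 → InXi (w1 ++ w2) ((e1 * e2).star)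

theorem my_add_kstar {α : Type} (a b : Language α) : (a + b)∗ = (a∗ * b∗)∗ := by
  apply le_antisymm
  · apply kstar_mono
    apply add_le
    · calc a ≤ a∗ := le_kstar
        _ = a∗ * 1 := (mul_one _).symm
        _ ≤ a∗ * b∗ := by gcongr; exact one_le_kstar
    · calc b ≤ b∗ := le_kstar
        _ = 1 * b∗ := (one_mul _).symm
        _ ≤ a∗ * b∗ := by gcongr; exact one_le_kstar
  · rw [← kstar_idem (a + b)]
    apply kstar_mono
    have h1 : a∗ ≤ (a + b)∗ := kstar_mono le_self_add
    have h2 : b∗ ≤ (a + b)∗ := kstar_mono le_add_self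
    calc a∗ * b∗ ≤ (a + b)∗ * (a + b)∗ := mul_le_mul' h1 h2
      _ = (a + b)∗ := kstar_mul_kstar _

lemma mem_foldr_matches {α : Type} (l : List (RegularExpression α)) (x : List α) :
    x ∈ (l.foldr (· + ·) (0 : RegularExpression α)).matches' ↔ ∃ r ∈ l, x ∈ r.matches' := by
  induction l with
  | nil => simp [RegularExpression.matches'_zero]
  | cons a t ih =>
      rw [List.foldr_cons, RegularExpression.matches'_add, Language.mem_add, ih]
      simp

lemma mem_bigUnion_matches {α : Type} (E : Finset (RegularExpression α)) (x : List α) :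
    x ∈ (bigUnion E).matches' ↔ ∃ r ∈ E, x ∈ r.matches' := by
  rw [bigUnion, mem_foldr_matches]
  simp

lemma bigUnion_insert_matches {α : Type} [DecidableEq (RegularExpression α)] (r : RegularExpression α)
    (E : Finset (RegularExpression α)) :
    (bigUnion (insert r E)).matches' = r.matches' + (bigUnion E).matches' := by
  ext x
  rw [Language.mem_add, mem_bigUnion_matches, mem_bigUnion_matches]
  simp [Finset.mem_insert, or_and_right, exists_or]

lemma xi_nil {α : Type} {w : List α} {r : RegularExpression α} (h : InXi w r) (hw : w = []) :
    r = 1 := by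
  induction h with
  | nil => rfl
  | base w hne => exact absurd hw hne
  | baseStar w hne => exact absurd hw hne
  | comp h1 h2 a b iha ihb => simp only [List.append_eq_nil_iff] at hw; exact absurd hw.1 h1
  | compStar h1 h2 a b iha ihb => simp only [List.append_eq_nil_iff] at hw; exact absurd hw.1 h1

lemma xi_star {α : Type} {w : List α} {r : RegularExpression α} (h : InXi w r) :
    ∃ r', InXi w r' ∧ r'.matches' = r.matches'∗ := by
  cases h with
  | nil => exact ⟨1, InXi.nil, by simp [RegularExpression.matches'_epsilon]⟩
  | base w hne => exact ⟨(wordExpr w).star, InXi.baseStar w hne, RegularExpression.matches'_star _⟩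
  | baseStar w hne =>
      exact ⟨(wordExpr w).star, InXi.baseStar w hne, by
        simp [RegularExpression.matches'_star]⟩
  | comp h1 h2 a b => exact ⟨_, InXi.compStar h1 h2 a b, RegularExpression.matches'_star _⟩
  | compStar h1 h2 a b =>
      exact ⟨_, InXi.compStar h1 h2 a b, by
        simp [RegularExpression.matches'_star]⟩

lemma flatten_ne_nil {α : Type} {S : List (List α)} (hne : S ≠ [])
    (h : ∀ y ∈ S, y ≠ []) : S.flatten ≠ [] := by
  cases S with
  | nil => exact absurd rfl hne
  | cons v t =>
      simp only [List.flatten_cons, ne_eq, List.append_eq_nil_iff, not_and]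
      intro hv
      exact absurd hv (h v (by simp))

lemma key_star_aux {α : Type} {f : RegularExpression α}
    (IH : ∀ w ∈ f.matches', ∃ r ∈ kappa f, ∃ r', InXi w r' ∧ r.matches' = r'.matches') :
    ∀ S : List (List α), S ≠ [] → (∀ y ∈ S, y ∈ f.matches' ∧ y ≠ []) →
      ∃ E : Finset (RegularExpression α), ↑E ⊆ kappa f ∧
        ∃ s, InXi S.flatten s ∧ s.matches' = (bigUnion E).matches'∗ := by
  classical
  intro S
  induction S with
  | nil => intro h; exact absurd rfl h
  | cons u S' ih =>
      intro _ hS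
      obtain ⟨hu, hune⟩ := hS u (by simp)
      obtain ⟨r1, hr1, s1, hs1, heq1⟩ := IH u hu
      obtain ⟨s1', hs1', heq1'⟩ := xi_star hs1
      rcases eq_or_ne S' [] with rfl | hS'
      · refine ⟨{r1}, by simpa using hr1, s1', by simpa using hs1', ?_⟩
        have : (bigUnion ({r1} : Finset (RegularExpression α))).matches' = r1.matches' := by
          ext x; simp [mem_bigUnion_matches]
        rw [this, heq1', heq1]
      · obtain ⟨E', hE', s', hs', heqs'⟩ := ih hS' (fun y hy => hS y (by simp [hy]))
        refine ⟨insert r1 E', ?_, ((s1' * s').star), ?_, ?_⟩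
        · intro x hx
          simp only [Finset.coe_insert, Set.mem_insert_iff] at hx
          rcases hx with rfl | hx
          · exact hr1
          · exact hE' hx
        · rw [List.flatten_cons]
          exact InXi.compStar hune (flatten_ne_nil hS' (fun y hy => (hS y (by simp [hy])).2))
            hs1' hs'
        · rw [RegularExpression.matches'_star, RegularExpression.matches'_mul,
            heq1', heqs', ← heq1, bigUnion_insert_matches, my_add_kstar]

lemma key {α : Type} {e : RegularExpression α} (h : UnionFree e) :
    ∀ w ∈ e.matches', ∃ r ∈ kappa e, ∃ r', InXi w r' ∧ r.matches' = r'.matches' := by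
  induction h with
  | epsilon =>
      intro w hw
      rw [RegularExpression.matches'_epsilon, Language.mem_one] at hw
      subst hw
      exact ⟨1, rfl, 1, InXi.nil, rfl⟩
  | char a =>
      intro w hw
      rw [RegularExpression.matches'_char] at hw
      replace hw : w = [a] := hw
      subst hw
      refine ⟨RegularExpression.char a, rfl, wordExpr [a], InXi.base [a] (by simp), ?_⟩
      simp [wordExpr, RegularExpression.matches'_mul, RegularExpression.matches'_char,
        RegularExpression.matches'_epsilon]
  | comp hf hg ihf ihg =>
      intro w hw
      rw [RegularExpression.matches'_mul, Language.mem_mul] at hw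
      obtain ⟨a, ha, b, hb, rfl⟩ := hw
      obtain ⟨r1, hr1, s1, hs1, heq1⟩ := ihf a ha
      obtain ⟨r2, hr2, s2, hs2, heq2⟩ := ihg b hb
      refine ⟨r1 * r2, ⟨r1, hr1, r2, hr2, rfl⟩, ?_⟩
      rcases eq_or_ne a [] with rfl | hane
      · have : s1 = 1 := xi_nil hs1 rfl
        subst this
        refine ⟨s2, by simpa using hs2, ?_⟩
        rw [RegularExpression.matches'_mul, heq1, heq2,
          RegularExpression.matches'_epsilon, one_mul]
      · rcases eq_or_ne b [] with rfl | hbne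
        · have : s2 = 1 := xi_nil hs2 rfl
          subst this
          refine ⟨s1, by simpa using hs1, ?_⟩
          rw [RegularExpression.matches'_mul, heq1, heq2,
            RegularExpression.matches'_epsilon, mul_one]
        · refine ⟨s1 * s2, InXi.comp hane hbne hs1 hs2, ?_⟩
          rw [RegularExpression.matches'_mul, RegularExpression.matches'_mul, heq1, heq2]
  | star hf ih =>
      intro w hw
      rw [RegularExpression.matches'_star, Language.mem_kstar_iff_exists_nonempty] at hw
      obtain ⟨S, rfl, hS⟩ := hw
      rcases eq_or_ne S [] with rfl | hSne
      · refine ⟨(bigUnion ∅).star, ⟨∅, by simp, rfl⟩, 1, InXi.nil, ?_⟩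
        have : (bigUnion (∅ : Finset (RegularExpression α))).matches' = 0 := by
          ext x; simp [mem_bigUnion_matches]
        rw [RegularExpression.matches'_star, this, kstar_zero,
          RegularExpression.matches'_epsilon]
      · obtain ⟨E, hE, s, hs, heq⟩ := key_star_aux ih S hSne hS
        exact ⟨(bigUnion E).star, ⟨E, hE, rfl⟩, s, hs,
          by rw [RegularExpression.matches'_star, heq]⟩

/-- For a regular language `R` with a chosen finite union-free decomposition `es`
(so `κ(R) = ⋃ e ∈ es, κ(e)`), every `w ∈ R` admits some element of `κ(R)` that is a
star-generalization of `w` (up to language equality): `κ(R) ∩ Ξ(w) ≠ ∅`. -/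
theorem kappaR_inter_xi_nonempty {α : Type} (R : Language α)
    (es : List (RegularExpression α)) (hUF : ∀ e ∈ es, UnionFree e)
    (hdec : R = {w | ∃ e ∈ es, w ∈ e.matches'})
    (w : List α) (hw : w ∈ R) :
    ∃ r : RegularExpression α, (∃ e ∈ es, r ∈ kappa e) ∧
      ∃ r' : RegularExpression α, InXi w r' ∧ r.matches' = r'.matches' := by
  rw [hdec] at hw
  obtain ⟨e, he, hwe⟩ := hw
  obtain ⟨r, hr, r', h1, h2⟩ := key (hUF e he) w hwe
  exact ⟨r, ⟨e, he, hr⟩, r', h1, h2⟩
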